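/- Let β₁, …, β_E ∈ ℝ^m (E ≥ 2) and α ∈ (0,1). Apply the simultaneous update β_e' = α·β_e + (1−α)·β_{ē(e)} with ē(e) ∈ argmax_{e'≠e} ‖β_e − β_{e'}‖₂. If the β_e are not all equal before the update, then the updated points satisfy max_{e,e'} ‖β_e' − β_{e''}'‖₂ < max_{e,e'} ‖β_e − β_{e'}‖₂; i.e., the diameter strictly decreases. -/

import Mathlib

/-- Diameter of a finite configuration of classifiers: max pairwise distance. -/
noncomputable def diamConf {m E : ℕ} (hE : 2 ≤ E)
    (β : Fin E → EuclideanSpace ℝ (Fin m)) : ℝ :=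
  Finset.univ.sup'
    (Finset.univ_nonempty_iff.mpr ⟨(⟨0, by omega⟩, ⟨0, by omega⟩)⟩)
    (fun p : Fin E × Fin E => ‖β p.1 - β p.2‖)

/-- the simultaneous interpolation update toward the farthest
classifier strictly decreases the diameter whenever the classifiers are not
all equal. -/
theorem stmt_17 {m E : ℕ} (hE : 2 ≤ E)
    (α : ℝ) (hα : α ∈ Set.Ioo (0 : ℝ) 1)
    (β β' : Fin E → EuclideanSpace ℝ (Fin m))
    (hupd : ∀ e, ∃ ebar : Fin E, ebar ≠ e ∧
      (∀ e', e' ≠ e → ‖β e - β e'‖ ≤ ‖β e - β ebar‖) ∧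
      β' e = α • β e + (1 - α) • β ebar)
    (hne : ∃ e e', β e ≠ β e') :
    diamConf hE β' < diamConf hE β := by
  set D := diamConf hE β with hDdef
  have hbound : ∀ a b : Fin E, ‖β a - β b‖ ≤ D := by
    intro a b
    exact Finset.le_sup' (f := fun p : Fin E × Fin E => ‖β p.1 - β p.2‖)
      (Finset.mem_univ (a, b))
  obtain ⟨e0, e1, hne01⟩ := hne
  have hDpos : 0 < D := by
    have : 0 < ‖β e0 - β e1‖ := by
      rw [norm_pos_iff]; exact sub_ne_zero.mpr hne01
    exact lt_of_lt_of_le this (hbound e0 e1)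
  rw [diamConf]
  refine (Finset.sup'_lt_iff _).mpr ?_
  rintro ⟨e, f⟩ -
  simp only
  obtain ⟨c, hc_ne, hc_max, hc_eq⟩ := hupd e
  obtain ⟨d, hd_ne, hd_max, hd_eq⟩ := hupd f
  have hdiff : β' e - β' f = α • (β e - β f) + (1 - α) • (β c - β d) := by
    rw [hc_eq, hd_eq]; module
  by_cases huv : β e - β f = β c - β d
  · have h1 : β' e - β' f = β e - β f := by
      rw [hdiff, ← huv]; module
    rw [h1]
    rcases (hbound e f).lt_or_eq with h | h
    · exact h
    · exfalso
      have hef : e ≠ f := by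
        rintro rfl
        rw [sub_self, norm_zero] at h
        exact hDpos.ne h
      have hac : ‖β e - β c‖ = D := by
        refine le_antisymm (hbound e c) ?_
        calc D = ‖β e - β f‖ := h.symm
        _ ≤ ‖β e - β c‖ := hc_max f (Ne.symm hef)
      have hdval : β d = β c - (β e - β f) := by
        rw [huv]; abel
      set u := β e - β f with hu
      set x := β c - β e with hx
      have h1' : β c - β f = x + u := by rw [hx, hu]; abel
      have h2' : β e - β d = -x + u := by rw [hdval, hx, hu]; abel
      have hcb : ‖x + u‖ ≤ D := h1' ▸ hbound c f
      have had : ‖-x + u‖ ≤ D := h2' ▸ hbound e d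
      have hxn : ‖x‖ = D := by rw [hx, norm_sub_rev]; exact hac
      have e1 : ‖x + u‖ ^ 2 = ‖x‖ ^ 2 + 2 * (inner ℝ x u : ℝ) + ‖u‖ ^ 2 :=
        norm_add_sq_real x u
      have e2 : ‖-x + u‖ ^ 2 = ‖x‖ ^ 2 - 2 * (inner ℝ x u : ℝ) + ‖u‖ ^ 2 := by
        rw [norm_add_sq_real, inner_neg_left, norm_neg]; ring
      have sq1 : ‖x + u‖ ^ 2 ≤ D ^ 2 := by
        have := norm_nonneg (x + u); nlinarith
      have sq2 : ‖-x + u‖ ^ 2 ≤ D ^ 2 := by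
        have := norm_nonneg (-x + u); nlinarith
      have hx2 : ‖x‖ ^ 2 = D ^ 2 := by rw [hxn]
      have hu2 : ‖u‖ ^ 2 = D ^ 2 := by rw [h]
      have hD2 : (0:ℝ) < D ^ 2 := pow_pos hDpos 2
      rw [hx2, hu2] at e1 e2
      linarith
  · rw [hdiff]
    exact norm_combo_lt_of_ne (hbound e f) (hbound c d) huv hα.1
      (by linarith [hα.2]) (by ring)
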